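/- Let q : ℝ → ℝ be twice continuously differentiable, satisfy the Painlevé II equation q''(s) = s·q(s) + 2·q(s)³ for all s ∈ ℝ, and satisfy the decay bound: there is a constant C with |q(s)| ≤ C·e^{−s} and |q'(s)| ≤ C·e^{−s} for all s ≥ 0. Define F(s) := exp(−∫_s^∞ (x−s)·q(x)² dx), u₀₀(s) := ∫_s^∞ q(x)² dx, q₁ := q' + u₀₀·q, u₁₀(s) := ∫_s^∞ q₁(x)·q(x) dx, q₂(s) := s·q(s) − u₁₀(s)·q(s) + u₀₀(s)·q₁(s), and u₂₀(s) := ∫_s^∞ q₂(x)·q(x) dx. Then for every s ∈ ℝ, F(s)·u₂₀(s) = (s/3)·F'(s) + (1/6)·F'''(s). -/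

import Mathlib

/-!
Along a decaying Painlevé II solution the tail integrals are polynomials in `s`, `q`, `q'`
and `u₀₀`: `u₀₀ = q'² - s q² - q⁴`, `u₁₀ = (u₀₀² - q²)/2` and
`u₂₀ = s u₀₀/3 + u₀₀³/6 - q² u₀₀/2 - q q'/3`. Each closed form has derivative minus the
integrand (using `q'' = s q + 2 q³` and `u₀₀' = -q²`) and tends to `0` at `+∞`, so it equals the
tail integral. On the other side `(log F)' = u₀₀`, hence `F''' = (u₀₀³ - 3 u₀₀ q² - 2 q q') F`,
and the identity becomes a polynomial one.
-/

open MeasureTheory Set Filter Real Topology Asymptotics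

theorem hasDerivAt_integral_Ioi {f : ℝ → ℝ} (hf : Continuous f)
    (hint : ∀ a, IntegrableOn f (Ioi a)) (s : ℝ) :
    HasDerivAt (fun t => ∫ x in Ioi t, f x) (-f s) s := by
  have hsplit : (fun t => ∫ x in Ioi t, f x) = fun t => (∫ x in Ioi 0, f x) - ∫ x in 0..t, f x :=
    funext fun t => by rw [← intervalIntegral.integral_Ioi_sub_Ioi' (hint 0) (hint t)]; ring
  rw [hsplit, ← zero_sub]
  exact (hasDerivAt_const s _).sub (hf.integral_hasStrictDerivAt 0 s).hasDerivAt

theorem integral_Ioi_eq_of_hasDerivAt_neg {f G : ℝ → ℝ} {s : ℝ}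
    (hG : ∀ x, HasDerivAt G (-f x) x) (hG0 : Tendsto G atTop (𝓝 0))
    (hf : IntegrableOn f (Ioi s)) : ∫ x in Ioi s, f x = G s := by
  have h := integral_Ioi_of_hasDerivAt_of_tendsto' (fun x _ => hG x) hf.neg hG0
  rw [integral_neg] at h
  linarith

theorem integrableOn_Ioi_mul_of_isBigO_exp_neg {f g : ℝ → ℝ} (hf : Continuous f)
    (hg : Continuous g) (hfO : f =O[atTop] fun _ => (1 : ℝ))
    (hgO : g =O[atTop] fun x => exp (-x)) (a : ℝ) :
    IntegrableOn (fun x => f x * g x) (Ioi a) :=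
  integrable_of_isBigO_exp_neg one_pos (hf.mul hg).continuousOn <| by
    simpa only [one_mul, neg_mul] using hfO.mul hgO

theorem isBigO_exp_neg_of_abs_le {g : ℝ → ℝ} {C : ℝ} (h : ∀ x, 0 ≤ x → |g x| ≤ C * exp (-x)) :
    g =O[atTop] fun x => exp (-x) :=
  IsBigO.of_bound C <| (eventually_ge_atTop 0).mono fun x hx => by
    simpa only [Real.norm_eq_abs, abs_of_pos (exp_pos _)] using h x hx

theorem tendsto_id_mul_of_isBigO_exp_neg {g : ℝ → ℝ} (hgO : g =O[atTop] fun x => exp (-x)) :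
    Tendsto (fun x => x * g x) atTop (𝓝 0) :=
  ((isBigO_refl (fun x : ℝ => x) atTop).mul hgO).trans_tendsto <| by
    simpa only [pow_one] using tendsto_pow_mul_exp_neg_atTop_nhds_zero 1

theorem iteratedDeriv_three_eq_of_hasDerivAt {F u q p : ℝ → ℝ}
    (hF : ∀ x, HasDerivAt F (u x * F x) x) (hu : ∀ x, HasDerivAt u (-(q x ^ 2)) x)
    (hq : ∀ x, HasDerivAt q (p x) x) (s : ℝ) :
    iteratedDeriv 3 F s = (u s ^ 3 - 3 * u s * q s ^ 2 - 2 * q s * p s) * F s := by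
  have h1 : deriv F = fun x => u x * F x := funext fun x => (hF x).deriv
  have h2 : deriv (deriv F) = fun x => (u x ^ 2 - q x ^ 2) * F x := by
    rw [h1]; exact funext fun x => ((hu x).mul (hF x)).deriv.trans (by ring)
  rw [iteratedDeriv_succ, iteratedDeriv_succ, iteratedDeriv_one, h2]
  exact ((((hu s).pow 2).sub ((hq s).pow 2)).mul (hF s)).deriv.trans <| by
    simp only [Pi.sub_apply, Pi.pow_apply]; ring

structure IsDecayingPainleveII (q q' : ℝ → ℝ) : Prop where
  hasDerivAt : ∀ x, HasDerivAt q (q' x) x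
  hasDerivAt_deriv : ∀ x, HasDerivAt q' (x * q x + 2 * q x ^ 3) x
  isBigO : q =O[atTop] fun x => exp (-x)
  isBigO_deriv : q' =O[atTop] fun x => exp (-x)

/-- Twice the Painlevé II Hamiltonian `p²/2 - s q²/2 - q⁴/2` at `p = q'`. -/
def painleveHamiltonian (q q' : ℝ → ℝ) (s : ℝ) : ℝ := q' s ^ 2 - s * q s ^ 2 - q s ^ 4

namespace IsDecayingPainleveII

variable {q q' : ℝ → ℝ}

theorem continuous (h : IsDecayingPainleveII q q') : Continuous q :=
  continuous_iff_continuousAt.2 fun x => (h.hasDerivAt x).continuousAt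

theorem continuous_deriv (h : IsDecayingPainleveII q q') : Continuous q' :=
  continuous_iff_continuousAt.2 fun x => (h.hasDerivAt_deriv x).continuousAt

theorem tendsto (h : IsDecayingPainleveII q q') : Tendsto q atTop (𝓝 0) :=
  h.isBigO.trans_tendsto Real.tendsto_exp_neg_atTop_nhds_zero

theorem tendsto_deriv (h : IsDecayingPainleveII q q') : Tendsto q' atTop (𝓝 0) :=
  h.isBigO_deriv.trans_tendsto Real.tendsto_exp_neg_atTop_nhds_zero

theorem integrableOn_mul (h : IsDecayingPainleveII q q') {f : ℝ → ℝ} (hf : Continuous f)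
    (hf0 : Tendsto f atTop (𝓝 0)) (a : ℝ) : IntegrableOn (fun x => f x * q x) (Ioi a) :=
  integrableOn_Ioi_mul_of_isBigO_exp_neg hf h.continuous (hf0.isBigO_one ℝ) h.isBigO a

theorem hasDerivAt_painleveHamiltonian (h : IsDecayingPainleveII q q') (x : ℝ) :
    HasDerivAt (painleveHamiltonian q q') (-(q x ^ 2)) x := by
  have := (((h.hasDerivAt_deriv x).pow 2).sub ((hasDerivAt_id' x).mul ((h.hasDerivAt x).pow 2))).sub
    ((h.hasDerivAt x).pow 4)
  refine this.congr_deriv ?_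
  simp only [Pi.pow_apply]
  push_cast
  ring

theorem continuous_painleveHamiltonian (h : IsDecayingPainleveII q q') :
    Continuous (painleveHamiltonian q q') :=
  continuous_iff_continuousAt.2 fun x => (h.hasDerivAt_painleveHamiltonian x).continuousAt

theorem tendsto_painleveHamiltonian (h : IsDecayingPainleveII q q') :
    Tendsto (painleveHamiltonian q q') atTop (𝓝 0) := by
  have := ((h.tendsto_deriv.pow 2).sub
    ((tendsto_id_mul_of_isBigO_exp_neg h.isBigO).mul h.tendsto)).sub (h.tendsto.pow 4)
  simp only [ne_eq, OfNat.ofNat_ne_zero, not_false_eq_true, zero_pow, mul_zero, sub_zero] at this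
  exact this.congr fun x => by rw [painleveHamiltonian]; ring

theorem integral_sq (h : IsDecayingPainleveII q q') (s : ℝ) :
    ∫ x in Ioi s, q x ^ 2 = painleveHamiltonian q q' s := by
  refine integral_Ioi_eq_of_hasDerivAt_neg h.hasDerivAt_painleveHamiltonian
    h.tendsto_painleveHamiltonian ?_
  simpa only [sq] using h.integrableOn_mul h.continuous h.tendsto s

theorem tendsto_id_mul_painleveHamiltonian (h : IsDecayingPainleveII q q') :
    Tendsto (fun x => x * painleveHamiltonian q q' x) atTop (𝓝 0) := by
  have hxq := tendsto_id_mul_of_isBigO_exp_neg h.isBigO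
  have hxq' := tendsto_id_mul_of_isBigO_exp_neg h.isBigO_deriv
  have := ((hxq'.mul h.tendsto_deriv).sub (hxq.pow 2)).sub (hxq.mul (h.tendsto.pow 3))
  simp only [ne_eq, OfNat.ofNat_ne_zero, not_false_eq_true, zero_pow, mul_zero, sub_zero] at this
  exact this.congr fun x => by rw [painleveHamiltonian]; ring

theorem integral_q1_mul (h : IsDecayingPainleveII q q') (s : ℝ) :
    ∫ x in Ioi s, (q' x + painleveHamiltonian q q' x * q x) * q x =
      (painleveHamiltonian q q' s ^ 2 - q s ^ 2) / 2 := by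
  set H := painleveHamiltonian q q'
  refine integral_Ioi_eq_of_hasDerivAt_neg (G := fun x => (H x ^ 2 - q x ^ 2) / 2)
    (fun x => ?_) ?_ ?_
  · refine ((((h.hasDerivAt_painleveHamiltonian x).pow 2).sub
      ((h.hasDerivAt x).pow 2)).div_const 2).congr_deriv ?_
    push_cast
    ring
  · simpa using ((h.tendsto_painleveHamiltonian.pow 2).sub (h.tendsto.pow 2)).div_const 2
  · refine h.integrableOn_mul (f := fun x => q' x + H x * q x)
      (h.continuous_deriv.add (h.continuous_painleveHamiltonian.mul h.continuous)) ?_ s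
    simpa using h.tendsto_deriv.add (h.tendsto_painleveHamiltonian.mul h.tendsto)

theorem integral_q2_mul (h : IsDecayingPainleveII q q') (s : ℝ) :
    ∫ x in Ioi s, (x * q x - (painleveHamiltonian q q' x ^ 2 - q x ^ 2) / 2 * q x +
        painleveHamiltonian q q' x * (q' x + painleveHamiltonian q q' x * q x)) * q x =
      s / 3 * painleveHamiltonian q q' s + painleveHamiltonian q q' s ^ 3 / 6 -
        q s ^ 2 * painleveHamiltonian q q' s / 2 - q s * q' s / 3 := by
  set H := painleveHamiltonian q q'
  have hH := h.hasDerivAt_painleveHamiltonian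
  refine integral_Ioi_eq_of_hasDerivAt_neg
    (G := fun x => x / 3 * H x + H x ^ 3 / 6 - q x ^ 2 * H x / 2 - q x * q' x / 3)
    (fun x => ?_) ?_ ?_
  · refine (((((hasDerivAt_id' x).div_const 3).mul (hH x)).add (((hH x).pow 3).div_const 6)).sub
      ((((h.hasDerivAt x).pow 2).mul (hH x)).div_const 2)).sub
      (((h.hasDerivAt x).mul (h.hasDerivAt_deriv x)).div_const 3) |>.congr_deriv ?_
    simp only [H, painleveHamiltonian, Pi.pow_apply]
    push_cast
    ring
  · have := (((h.tendsto_id_mul_painleveHamiltonian.div_const 3).add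
      ((h.tendsto_painleveHamiltonian.pow 3).div_const 6)).sub
      (((h.tendsto.pow 2).mul h.tendsto_painleveHamiltonian).div_const 2)).sub
      ((h.tendsto.mul h.tendsto_deriv).div_const 3)
    simp only [ne_eq, OfNat.ofNat_ne_zero, not_false_eq_true, zero_pow, zero_div, mul_zero,
      add_zero, sub_zero] at this
    exact this.congr fun x => by ring
  · have hqc := h.continuous
    have hq'c := h.continuous_deriv
    have hHc := h.continuous_painleveHamiltonian
    refine h.integrableOn_mul (by fun_prop) ?_ s
    have hu10 := ((h.tendsto_painleveHamiltonian.pow 2).sub (h.tendsto.pow 2)).div_const 2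
    have hq1 := h.tendsto_deriv.add (h.tendsto_painleveHamiltonian.mul h.tendsto)
    simpa using ((tendsto_id_mul_of_isBigO_exp_neg h.isBigO).sub (hu10.mul h.tendsto)).add
      (h.tendsto_painleveHamiltonian.mul hq1)

theorem hasDerivAt_integral_sub_mul_sq (h : IsDecayingPainleveII q q') (s : ℝ) :
    HasDerivAt (fun t => ∫ x in Ioi t, (x - t) * q x ^ 2) (-painleveHamiltonian q q' s) s := by
  have hsq : ∀ a, IntegrableOn (fun x => q x ^ 2) (Ioi a) := fun a => by
    simpa only [sq] using h.integrableOn_mul h.continuous h.tendsto a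
  have hxsq : ∀ a, IntegrableOn (fun x => x * q x ^ 2) (Ioi a) := fun a => by
    simpa only [sq, mul_assoc] using h.integrableOn_mul (f := fun x => x * q x)
      (continuous_id.mul h.continuous) (tendsto_id_mul_of_isBigO_exp_neg h.isBigO) a
  have hsplit : (fun t => ∫ x in Ioi t, (x - t) * q x ^ 2) =
      fun t => (∫ x in Ioi t, x * q x ^ 2) - t * ∫ x in Ioi t, q x ^ 2 := by
    ext t
    rw [← integral_const_mul, ← integral_sub (hxsq t) ((hsq t).const_mul t)]
    simp only [sub_mul]
  have hxsq' := hasDerivAt_integral_Ioi (f := fun x => x * q x ^ 2)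
    (continuous_id.mul (h.continuous.pow 2)) hxsq s
  have hsq' := hasDerivAt_integral_Ioi (f := fun x => q x ^ 2) (h.continuous.pow 2) hsq s
  rw [hsplit]
  refine (hxsq'.sub ((hasDerivAt_id' s).mul hsq')).congr_deriv ?_
  rw [h.integral_sq]
  ring

theorem hasDerivAt_exp_neg_integral_sub_mul_sq (h : IsDecayingPainleveII q q') (s : ℝ) :
    HasDerivAt (fun t => exp (-∫ x in Ioi t, (x - t) * q x ^ 2))
      (painleveHamiltonian q q' s * exp (-∫ x in Ioi s, (x - s) * q x ^ 2)) s := by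
  simpa only [Pi.neg_apply, neg_neg, mul_comm] using (h.hasDerivAt_integral_sub_mul_sq s).neg.exp

end IsDecayingPainleveII

/-- The table identity `u₂₀·F = (s/3)·F' + (1/6)·F'''`, where
`F(s) = exp(-∫_s^∞ (x-s) q(x)² dx)`, `u₀₀(s) = ∫_s^∞ q(x)² dx`, `q₁ = q' + u₀₀·q`,
`u₁₀(s) = ∫_s^∞ q₁(x) q(x) dx`, `q₂ = s·q - u₁₀·q + u₀₀·q₁`,
`u₂₀(s) = ∫_s^∞ q₂(x) q(x) dx`, and `q` is a Painlevé II solution with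
exponential decay at `+∞`. -/
theorem F_u20_eq (q F u00 q1 u10 q2 u20 : ℝ → ℝ) (hq : ContDiff ℝ 2 q)
    (hP2 : ∀ s : ℝ, iteratedDeriv 2 q s = s * q s + 2 * q s ^ 3)
    (C : ℝ)
    (hdecay : ∀ s : ℝ, 0 ≤ s →
      |q s| ≤ C * Real.exp (-s) ∧ |deriv q s| ≤ C * Real.exp (-s))
    (hF : ∀ s : ℝ, F s = Real.exp (-(∫ x in Set.Ioi s, (x - s) * q x ^ 2)))
    (hu00 : ∀ s : ℝ, u00 s = ∫ x in Set.Ioi s, q x ^ 2)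
    (hq1 : ∀ s : ℝ, q1 s = deriv q s + u00 s * q s)
    (hu10 : ∀ s : ℝ, u10 s = ∫ x in Set.Ioi s, q1 x * q x)
    (hq2 : ∀ s : ℝ, q2 s = s * q s - u10 s * q s + u00 s * q1 s)
    (hu20 : ∀ s : ℝ, u20 s = ∫ x in Set.Ioi s, q2 x * q x) :
    ∀ s : ℝ, F s * u20 s = (s / 3) * deriv F s + (1 / 6) * iteratedDeriv 3 F s := by
  have h : IsDecayingPainleveII q (deriv q) := by
    refine ⟨fun x => (hq.differentiable two_ne_zero x).hasDerivAt, fun x => ?_,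
      isBigO_exp_neg_of_abs_le fun x hx => (hdecay x hx).1,
      isBigO_exp_neg_of_abs_le fun x hx => (hdecay x hx).2⟩
    rw [← hP2, iteratedDeriv_succ, iteratedDeriv_one]
    simpa only [iteratedDeriv_one] using (hq.differentiable_iteratedDeriv' 1 x).hasDerivAt
  set H := painleveHamiltonian q (deriv q)
  have e00 : u00 = H := funext fun s => (hu00 s).trans (h.integral_sq s)
  have e1 : q1 = fun x => deriv q x + H x * q x := funext fun x => by rw [hq1, e00]
  have e10 : u10 = fun x => (H x ^ 2 - q x ^ 2) / 2 :=
    funext fun s => by rw [hu10, e1]; exact h.integral_q1_mul s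
  have e2 : q2 = fun x => x * q x - (H x ^ 2 - q x ^ 2) / 2 * q x + H x * (deriv q x + H x * q x) :=
    funext fun x => by rw [hq2, e10, e00, e1]
  have hF' : ∀ x, HasDerivAt F (H x * F x) x := fun x => by
    rw [hF x, show F = _ from funext hF]
    exact h.hasDerivAt_exp_neg_integral_sub_mul_sq x
  intro s
  rw [hu20, e2, h.integral_q2_mul, (hF' s).deriv,
    iteratedDeriv_three_eq_of_hasDerivAt hF' h.hasDerivAt_painleveHamiltonian h.hasDerivAt s]
  ring
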